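/- arXiv:2402.10794 — 2 statements merged into one kernel-verified Lean document; each statement's English description precedes it below -/
import Mathlib

section
/- For smooth f on a cube Q of volume one and τ ∈ (0,1], the difference of averages satisfies |⨍_Q f − ⨍_{τQ} f| ≤ (√n/2)·((1−τ)/τ^{n+1})·|Df|(Q). -/
open MeasureTheory Filter Metric Set
open scoped Pointwise
open scoped ENNReal Topology RealInnerProductSpace

noncomputable section

abbrev En (n : ℕ) := EuclideanSpace ℝ (Fin n)

/-- The open unit cube `(-1/2, 1/2)^n`. -/
def unitCube (n : ℕ) : Set (En n) := {x | ∀ i, |x i| < 1 / 2}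

/-- The open cube with center `c`, sidelength `l`, and orientation `A`. -/
def cube {n : ℕ} (c : En n) (l : ℝ) (A : En n ≃ₗᵢ[ℝ] En n) : Set (En n) :=
  (fun x => c + l • A x) '' unitCube n

/-- Mean oscillation of `f` over `Q`. -/
def osc {n : ℕ} (f : En n → ℝ) (Q : Set (En n)) : ℝ :=
  ⨍ x in Q, |f x - ⨍ y in Q, f y|

/-- Divergence of a vector field. -/
def divg {n : ℕ} (φ : En n → En n) (x : En n) : ℝ :=
  ∑ i, ⟪fderiv ℝ φ x (EuclideanSpace.single i (1 : ℝ)), EuclideanSpace.single i (1 : ℝ)⟫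

/-- The set of numbers `∫_U f div φ` over admissible test vector fields `φ`. -/
def tvSet {n : ℕ} (f : En n → ℝ) (U : Set (En n)) : Set ℝ :=
  {r | ∃ φ : En n → En n, ContDiff ℝ 1 φ ∧ HasCompactSupport φ ∧ tsupport φ ⊆ U ∧
      (∀ x, ‖φ x‖ ≤ 1) ∧ r = ∫ x in U, f x * divg φ x}

/-- The total variation `|Df|(U)`. -/
def totVar {n : ℕ} (f : En n → ℝ) (U : Set (En n)) : ℝ := sSup (tvSet f U)

/-- `f` is a function of bounded variation on `U`. -/
def IsBV {n : ℕ} (f : En n → ℝ) (U : Set (En n)) : Prop :=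
  IntegrableOn f U ∧ BddAbove (tvSet f U)

lemma isOpen_unitCube (n : ℕ) : IsOpen (unitCube n) := by
  have : unitCube n = ⋂ i, {x : En n | |x i| < 1/2} := by ext x; simp [unitCube]
  rw [this]
  exact isOpen_iInter_of_finite fun i =>
    isOpen_lt (continuous_abs.comp (EuclideanSpace.proj (𝕜 := ℝ) i).continuous) continuous_const

lemma volume_unitCube (n : ℕ) : volume (unitCube n) = 1 := by
  have h : unitCube n = (MeasurableEquiv.toLp 2 (Fin n → ℝ)).symm ⁻¹'
      (Set.univ.pi fun _ : Fin n => Ioo (-(1/2) : ℝ) (1/2)) := by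
    ext x
    simp [unitCube, abs_lt, MeasurableEquiv.toLp, and_comm]; rfl
  rw [h, (EuclideanSpace.volume_preserving_symm_measurableEquiv_toLp (Fin n)).measure_preimage
    (MeasurableSet.univ_pi fun _ => measurableSet_Ioo).nullMeasurableSet]
  simp [volume_pi_pi]
  norm_num

lemma integrableOn_of_bdd {α : Type*} [MeasurableSpace α] {μ : Measure α} {f : α → ℝ}
    {s : Set α} (hs : μ s ≠ ∞) (hm : AEStronglyMeasurable f (μ.restrict s)) {M : ℝ}
    (hb : ∀ᵐ a ∂μ.restrict s, ‖f a‖ ≤ M) : IntegrableOn f s μ :=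
  ⟨hm, HasFiniteIntegral.restrict_of_bounded M hs.lt_top hb⟩

variable {n : ℕ} (A : En n ≃ₗᵢ[ℝ] En n)

lemma cube_one : cube 0 1 A = A '' unitCube n := by
  simp [cube]

lemma cube_tau (τ : ℝ) : cube 0 τ A = τ • cube 0 1 A := by
  rw [cube_one]
  simp only [cube, zero_add]
  rw [← Set.image_smul, ← Set.image_comp]
  rfl

lemma smul_mem_cube {s : ℝ} (hs : |s| ≤ 1) {x : En n} (hx : x ∈ cube 0 1 A) :
    s • x ∈ cube 0 1 A := by
  rw [cube_one] at hx ⊢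
  obtain ⟨y, hy, rfl⟩ := hx
  refine ⟨s • y, fun i => ?_, (A.map_smul s y)⟩
  have h1 : |(s • y) i| = |s| * |y i| := by simp [abs_mul]
  rw [h1]
  calc |s| * |y i| ≤ 1 * |y i| := by gcongr
  _ < 1/2 := by rw [one_mul]; exact hy i

lemma norm_le_of_mem_cube {x : En n} (hx : x ∈ cube 0 1 A) : ‖x‖ ≤ Real.sqrt n / 2 := by
  rw [cube_one] at hx
  obtain ⟨y, hy, rfl⟩ := hx
  rw [A.norm_map, EuclideanSpace.norm_eq]
  have h4 : Real.sqrt ((n : ℝ) / 4) = Real.sqrt n / 2 := by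
    rw [show ((n:ℝ)/4) = n / 2^2 by norm_num, Real.sqrt_div (by positivity),
      Real.sqrt_sq (by norm_num)]
  rw [← h4]
  apply Real.sqrt_le_sqrt
  calc ∑ i, ‖y i‖^2 ≤ ∑ _i : Fin n, (1/2:ℝ)^2 := by
        refine Finset.sum_le_sum fun i _ => ?_
        have := (hy i).le
        rw [Real.norm_eq_abs]
        nlinarith [abs_nonneg (y i)]
  _ = (n:ℝ)/4 := by simp [Finset.sum_const]; ring

lemma isOpen_cube : IsOpen (cube 0 1 A) := by
  rw [cube_one]
  exact A.toHomeomorph.isOpenMap _ (isOpen_unitCube n)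

lemma volume_cube_one : volume (cube 0 1 A) = volume (unitCube n) := by
  rw [cube_one, Set.image_eq_preimage_of_inverse A.symm_apply_apply A.apply_symm_apply]
  exact A.symm.measurePreserving.measure_preimage
    (isOpen_unitCube n).measurableSet.nullMeasurableSet

lemma ftc_bound {τ : ℝ} (hτ : τ ∈ Set.Ioc (0:ℝ) 1) (f : En n → ℝ)
    (hf : ContDiffOn ℝ 1 f (cube 0 1 A)) {x : En n} (hx : x ∈ cube 0 1 A) :
    |f x - f (τ • x)| ≤ (1 - τ) * (Real.sqrt n / 2) *
      ∫ t in (0:ℝ)..1, ‖fderiv ℝ f ((τ + t * (1 - τ)) • x)‖ := by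
  obtain ⟨hτ0, hτ1⟩ := hτ
  have hQo : IsOpen (cube 0 1 A) := isOpen_cube A
  have hder : ∀ y ∈ cube 0 1 A, HasFDerivAt f (fderiv ℝ f y) y := fun y hy =>
    ((hf.contDiffAt (hQo.mem_nhds hy)).differentiableAt one_ne_zero).hasFDerivAt
  have hgc : ContinuousOn (fderiv ℝ f) (cube 0 1 A) :=
    hf.continuousOn_fderiv_of_isOpen hQo le_rfl
  set c : ℝ → En n := fun t => (τ + t * (1 - τ)) • x with hc
  have hmem : ∀ t ∈ Icc (0:ℝ) 1, c t ∈ cube 0 1 A := by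
    intro t ht
    apply smul_mem_cube A _ hx
    rw [abs_of_nonneg (by nlinarith [ht.1, ht.2])]
    nlinarith [ht.1, ht.2]
  have hcder : ∀ t : ℝ, HasDerivAt c ((1 - τ) • x) t := fun t =>
    (by simpa using ((hasDerivAt_id t).mul_const (1 - τ)).const_add τ :
      HasDerivAt (fun t : ℝ => τ + t * (1 - τ)) (1 - τ) t).smul_const x
  have hcc : Continuous c := by fun_prop
  have hDc : ContinuousOn (fun t => fderiv ℝ f (c t)) (Icc (0:ℝ) 1) :=
    hgc.comp hcc.continuousOn hmem
  have hDcont : ContinuousOn (fun t => (fderiv ℝ f (c t)) ((1 - τ) • x)) (Icc (0:ℝ) 1) :=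
    hDc.clm_apply continuousOn_const
  have hint : IntervalIntegrable (fun t => (fderiv ℝ f (c t)) ((1 - τ) • x))
      volume 0 1 := by
    apply ContinuousOn.intervalIntegrable
    rwa [uIcc_of_le zero_le_one]
  have heq : ∫ t in (0:ℝ)..1, (fderiv ℝ f (c t)) ((1 - τ) • x) = f (c 1) - f (c 0) := by
    have := intervalIntegral.integral_eq_sub_of_hasDerivAt (f := fun t => f (c t))
      (f' := fun t => (fderiv ℝ f (c t)) ((1 - τ) • x)) (a := 0) (b := 1) (fun t ht => by
        rw [uIcc_of_le zero_le_one] at ht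
        exact (hder _ (hmem t ht)).comp_hasDerivAt t (hcder t)) hint
    simpa using this
  have hc1 : c 1 = x := by simp [hc]
  have hc0 : c 0 = τ • x := by simp [hc]
  rw [hc1, hc0] at heq
  rw [← heq]
  have hnx : ‖x‖ ≤ Real.sqrt n / 2 := norm_le_of_mem_cube A hx
  calc |∫ t in (0:ℝ)..1, (fderiv ℝ f (c t)) ((1 - τ) • x)|
      ≤ ∫ t in (0:ℝ)..1, |(fderiv ℝ f (c t)) ((1 - τ) • x)| :=
        intervalIntegral.abs_integral_le_integral_abs zero_le_one
    _ ≤ ∫ t in (0:ℝ)..1, (1 - τ) * (Real.sqrt n / 2) * ‖fderiv ℝ f (c t)‖ := by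
        apply intervalIntegral.integral_mono_on zero_le_one hint.abs
        · apply ContinuousOn.intervalIntegrable
          rw [uIcc_of_le zero_le_one]
          exact (continuousOn_const.mul hDc.norm)
        · intro t ht
          calc |(fderiv ℝ f (c t)) ((1 - τ) • x)|
              ≤ ‖fderiv ℝ f (c t)‖ * ‖(1 - τ) • x‖ := (fderiv ℝ f (c t)).le_opNorm _
            _ = ‖fderiv ℝ f (c t)‖ * ((1 - τ) * ‖x‖) := by
                rw [norm_smul, Real.norm_eq_abs, abs_of_nonneg (by linarith)]
            _ ≤ ‖fderiv ℝ f (c t)‖ * ((1 - τ) * (Real.sqrt n / 2)) := by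
                exact mul_le_mul_of_nonneg_left
                  (mul_le_mul_of_nonneg_left hnx (by linarith)) (norm_nonneg _)
            _ = (1 - τ) * (Real.sqrt n / 2) * ‖fderiv ℝ f (c t)‖ := by ring
    _ = (1 - τ) * (Real.sqrt n / 2) * ∫ t in (0:ℝ)..1, ‖fderiv ℝ f (c t)‖ := by
        rw [intervalIntegral.integral_const_mul]

lemma zero_mem_cube : (0 : En n) ∈ cube 0 1 A := by
  rw [cube_one]
  exact ⟨0, fun i => by norm_num, A.map_zero⟩

lemma convex_cube : Convex ℝ (cube 0 1 A) := by
  rw [cube_one]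
  have hu : Convex ℝ (unitCube n) := by
    have : unitCube n = ⋂ i, (fun x : En n => x i) ⁻¹' (Ioo (-(1/2)) (1/2)) := by
      ext x; simp [unitCube, abs_lt, and_comm]
    rw [this]
    refine convex_iInter fun i => (convex_Ioo _ _).linear_preimage
      { toFun := fun x : En n => x i, map_add' := fun a b => rfl, map_smul' := fun c a => rfl }
  exact hu.linear_image A.toLinearEquiv.toLinearMap

lemma isCompact_closure_cube : IsCompact (closure (cube 0 1 A)) :=
  (isBounded_iff_forall_norm_le.2 ⟨Real.sqrt n / 2, fun x hx => norm_le_of_mem_cube A hx⟩).isCompact_closure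

lemma fderiv_bound (f : En n → ℝ) (hf : ContDiffOn ℝ 1 f (closure (cube 0 1 A))) :
    ∃ M : ℝ, ∀ y ∈ cube 0 1 A, ‖fderiv ℝ f y‖ ≤ M := by
  have hud : UniqueDiffOn ℝ (closure (cube 0 1 A)) := by
    apply uniqueDiffOn_convex (convex_cube A).closure
    exact ⟨0, interior_mono subset_closure
      ((isOpen_cube A).subset_interior_iff.2 subset_rfl (zero_mem_cube A))⟩
  have hcw : ContinuousOn (fderivWithin ℝ f (closure (cube 0 1 A))) (closure (cube 0 1 A)) :=
    hf.continuousOn_fderivWithin hud le_rfl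
  obtain ⟨M, hM⟩ := (isCompact_closure_cube A).exists_bound_of_continuousOn hcw
  refine ⟨M, fun y hy => ?_⟩
  rw [← fderivWithin_of_mem_nhds
    (mem_of_superset ((isOpen_cube A).mem_nhds hy) subset_closure)]
  exact hM y (subset_closure hy)

set_option maxHeartbeats 2000000 in
/-- On a cube of volume one, the averages over `Q` and over its concentric contraction `τQ`
differ by at most `(√n/2)·((1-τ)/τ^{n+1})·|Df|(Q)`, for `f` of class `C¹` on the closed cube. -/
theorem average_difference_est (n : ℕ) (hn : 1 ≤ n) (A : En n ≃ₗᵢ[ℝ] En n) (τ : ℝ)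
    (hτ : τ ∈ Set.Ioc (0 : ℝ) 1) (f : En n → ℝ)
    (hf : ContDiffOn ℝ 1 f (closure (cube 0 1 A))) :
    |(⨍ x in cube 0 1 A, f x) - ⨍ x in cube 0 τ A, f x| ≤
      (Real.sqrt n / 2) * ((1 - τ) / τ ^ (n + 1)) * ∫ x in cube 0 1 A, ‖fderiv ℝ f x‖ := by
  obtain ⟨hτ0, hτ1⟩ := hτ
  set Q := cube 0 1 A with hQdef
  have hQo : IsOpen Q := isOpen_cube A
  have hQm : MeasurableSet Q := hQo.measurableSet
  have hQv : volume Q = 1 := by rw [hQdef, volume_cube_one, volume_unitCube]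
  have hQK : IsCompact (closure Q) := isCompact_closure_cube A
  have hfQ : ContDiffOn ℝ 1 f Q := hf.mono subset_closure
  have hgc : ContinuousOn (fun y => ‖fderiv ℝ f y‖) Q :=
    (hfQ.continuousOn_fderiv_of_isOpen hQo le_rfl).norm
  obtain ⟨M, hM⟩ := fderiv_bound A f hf
  set I := ∫ x in Q, ‖fderiv ℝ f x‖ with hI
  have hgint : IntegrableOn (fun y => ‖fderiv ℝ f y‖) Q := by
    apply integrableOn_of_bdd (by rw [hQv]; exact ENNReal.one_ne_top)
      (hgc.aestronglyMeasurable hQm)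
    exact (ae_restrict_iff' hQm).2 (ae_of_all _ fun x hx => by
      rw [Real.norm_eq_abs, abs_of_nonneg (norm_nonneg _)]; exact hM x hx)
  have hInn : 0 ≤ I := setIntegral_nonneg hQm fun x _ => norm_nonneg _
  have hsub : ∀ s : ℝ, 0 < s → s ≤ 1 → s • Q ⊆ Q := by
    rintro s h0 h1 _ ⟨x, hx, rfl⟩
    exact smul_mem_cube A (by rw [abs_of_pos h0]; linarith) hx
  have hsmem : ∀ s : ℝ, 0 < s → s ≤ 1 → ∀ x ∈ Q, s • x ∈ Q := fun s h0 h1 x hx =>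
    hsub s h0 h1 ⟨x, hx, rfl⟩
  -- averages as integrals
  have havg1 : (⨍ x in Q, f x) = ∫ x in Q, f x := by
    rw [setAverage_eq, measureReal_def, hQv]; simp
  have hQτv : volume (cube 0 τ A) = ENNReal.ofReal (τ ^ n) := by
    rw [cube_tau, Measure.addHaar_smul, ← hQdef, hQv, mul_one, finrank_euclideanSpace_fin,
      abs_of_nonneg (by positivity)]
  have hcov : ∫ x in Q, f (τ • x) = (τ ^ n)⁻¹ • ∫ x in τ • Q, f x := by
    rw [Measure.setIntegral_comp_smul_of_pos _ _ _ hτ0, finrank_euclideanSpace_fin]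
  have havg2 : (⨍ x in cube 0 τ A, f x) = ∫ x in Q, f (τ • x) := by
    rw [setAverage_eq, measureReal_def, hQτv, hcov, cube_tau, ← hQdef,
      ENNReal.toReal_ofReal (by positivity)]
  -- integrability of f and f ∘ (τ • ·) on Q
  have hfc : ContinuousOn f (closure Q) := hf.continuousOn
  have hfint : IntegrableOn f Q := (hfc.integrableOn_compact hQK).mono_set subset_closure
  obtain ⟨C, hC⟩ := hQK.exists_bound_of_continuousOn hfc
  have hfτcont : ContinuousOn (fun x => f (τ • x)) Q :=
    hfQ.continuousOn.comp (continuous_const_smul τ).continuousOn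
      (fun x hx => hsmem τ hτ0 hτ1 x hx)
  have hfτint : IntegrableOn (fun x => f (τ • x)) Q := by
    apply integrableOn_of_bdd (M := C) (by rw [hQv]; exact ENNReal.one_ne_top)
      (hfτcont.aestronglyMeasurable hQm)
    exact (ae_restrict_iff' hQm).2 (ae_of_all _ fun x hx =>
      hC _ (subset_closure (hsmem τ hτ0 hτ1 x hx)))
  -- reduce to integral of the difference
  have hstep1 : |(⨍ x in Q, f x) - ⨍ x in cube 0 τ A, f x| ≤
      ∫ x in Q, |f x - f (τ • x)| := by
    rw [havg1, havg2, ← integral_sub hfint hfτint]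
    simpa [Real.norm_eq_abs] using
      norm_integral_le_integral_norm (μ := volume.restrict Q) (f := fun x => f x - f (τ • x))
  -- pointwise FTC bound, in ℝ≥0∞ form
  set c0 := (1 - τ) * (Real.sqrt n / 2) with hc0
  have hc0nn : 0 ≤ c0 := mul_nonneg (by linarith) (by positivity)
  have key1 : ∀ x ∈ Q, ENNReal.ofReal |f x - f (τ • x)| ≤
      ENNReal.ofReal c0 *
        ∫⁻ t in Ioc (0:ℝ) 1, ENNReal.ofReal ‖fderiv ℝ f ((τ + t * (1 - τ)) • x)‖ := by
    intro x hx
    have h1 := ftc_bound A ⟨hτ0, hτ1⟩ f hfQ hx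
    have hcont : ContinuousOn (fun t : ℝ => ‖fderiv ℝ f ((τ + t * (1 - τ)) • x)‖)
        (Icc 0 1) := by
      apply ContinuousOn.norm
      apply (hfQ.continuousOn_fderiv_of_isOpen hQo le_rfl).comp
      · exact Continuous.continuousOn (by fun_prop)
      · intro t ht
        exact hsmem _ (by nlinarith [ht.1, ht.2]) (by nlinarith [ht.1, ht.2]) x hx
    have hint2 : IntegrableOn (fun t : ℝ => ‖fderiv ℝ f ((τ + t * (1 - τ)) • x)‖)
        (Ioc 0 1) :=
      (hcont.integrableOn_compact isCompact_Icc).mono_set Ioc_subset_Icc_self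
    have h2 : (∫ t in (0:ℝ)..1, ‖fderiv ℝ f ((τ + t * (1 - τ)) • x)‖) =
        ∫ t in Ioc (0:ℝ) 1, ‖fderiv ℝ f ((τ + t * (1 - τ)) • x)‖ :=
      intervalIntegral.integral_of_le zero_le_one
    have h3 : ENNReal.ofReal (∫ t in Ioc (0:ℝ) 1, ‖fderiv ℝ f ((τ + t * (1 - τ)) • x)‖) =
        ∫⁻ t in Ioc (0:ℝ) 1, ENNReal.ofReal ‖fderiv ℝ f ((τ + t * (1 - τ)) • x)‖ :=
      ofReal_integral_eq_lintegral_ofReal hint2 (ae_of_all _ fun t => norm_nonneg _)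
    calc ENNReal.ofReal |f x - f (τ • x)|
        ≤ ENNReal.ofReal (c0 * ∫ t in (0:ℝ)..1, ‖fderiv ℝ f ((τ + t * (1 - τ)) • x)‖) :=
          ENNReal.ofReal_le_ofReal (by rw [hc0]; exact h1)
      _ = ENNReal.ofReal c0 *
          ENNReal.ofReal (∫ t in (0:ℝ)..1, ‖fderiv ℝ f ((τ + t * (1 - τ)) • x)‖) :=
          ENNReal.ofReal_mul hc0nn
      _ = _ := by rw [h2, h3]
  -- inner estimate after rescaling
  have key2 : ∀ t ∈ Ioc (0:ℝ) 1,
      (∫⁻ x in Q, ENNReal.ofReal ‖fderiv ℝ f ((τ + t * (1 - τ)) • x)‖) ≤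
      ENNReal.ofReal ((τ ^ n)⁻¹ * I) := by
    intro t ht
    set s := τ + t * (1 - τ) with hs
    have hs0 : 0 < s := by nlinarith [ht.1, ht.2]
    have hs1 : s ≤ 1 := by nlinarith [ht.1, ht.2]
    have hτs : τ ≤ s := by nlinarith [ht.1, ht.2]
    have hmapc : ContinuousOn (fun x => ‖fderiv ℝ f (s • x)‖) Q :=
      hgc.comp (continuous_const_smul s).continuousOn (fun x hx => hsmem s hs0 hs1 x hx)
    have hint3 : IntegrableOn (fun x => ‖fderiv ℝ f (s • x)‖) Q := by
      apply integrableOn_of_bdd (M := M) (by rw [hQv]; exact ENNReal.one_ne_top)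
        (hmapc.aestronglyMeasurable hQm)
      exact (ae_restrict_iff' hQm).2 (ae_of_all _ fun x hx => by
        rw [Real.norm_eq_abs, abs_of_nonneg (norm_nonneg _)]
        exact hM _ (hsmem s hs0 hs1 x hx))
    have h1 : (∫⁻ x in Q, ENNReal.ofReal ‖fderiv ℝ f (s • x)‖) =
        ENNReal.ofReal (∫ x in Q, ‖fderiv ℝ f (s • x)‖) :=
      (ofReal_integral_eq_lintegral_ofReal hint3 (ae_of_all _ fun x => norm_nonneg _)).symm
    rw [h1]
    apply ENNReal.ofReal_le_ofReal
    have h2 : (∫ x in Q, ‖fderiv ℝ f (s • x)‖) =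
        (s ^ n)⁻¹ • ∫ x in s • Q, ‖fderiv ℝ f x‖ := by
      have := Measure.setIntegral_comp_smul_of_pos volume (fun y => ‖fderiv ℝ f y‖) Q hs0
      rwa [finrank_euclideanSpace_fin] at this
    rw [h2, smul_eq_mul]
    have h3 : (∫ x in s • Q, ‖fderiv ℝ f x‖) ≤ I :=
      setIntegral_mono_set hgint (ae_of_all _ fun x => norm_nonneg _)
        (hsub s hs0 hs1).eventuallyLE
    have h4 : (s ^ n)⁻¹ ≤ (τ ^ n)⁻¹ := by
      apply inv_anti₀ (by positivity)
      exact pow_le_pow_left₀ hτ0.le hτs n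
    have h5 : (0:ℝ) ≤ ∫ x in s • Q, ‖fderiv ℝ f x‖ := by
      apply setIntegral_nonneg_of_ae_restrict (ae_of_all _ fun x => norm_nonneg _)
    calc (s ^ n)⁻¹ * ∫ x in s • Q, ‖fderiv ℝ f x‖ ≤ (s ^ n)⁻¹ * I := by
          apply mul_le_mul_of_nonneg_left h3 (by positivity)
      _ ≤ (τ ^ n)⁻¹ * I := mul_le_mul_of_nonneg_right h4 hInn
  -- Tonelli
  have hsmc : Continuous (fun p : En n × ℝ => (τ + p.2 * (1 - τ)) • p.1) := by fun_prop
  have hmapsTo : MapsTo (fun p : En n × ℝ => (τ + p.2 * (1 - τ)) • p.1)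
      (Q ×ˢ Ioc (0:ℝ) 1) Q := by
    rintro ⟨x, t⟩ ⟨hx, ht⟩
    exact hsmem _ (by nlinarith [ht.1, ht.2]) (by nlinarith [ht.1, ht.2]) x hx
  have hmeas : Measurable (fun p : En n × ℝ =>
      ENNReal.ofReal ‖fderiv ℝ f ((τ + p.2 * (1 - τ)) • p.1)‖) :=
    ENNReal.measurable_ofReal.comp ((measurable_fderiv ℝ f).comp hsmc.measurable).norm
  have hswap := lintegral_lintegral_swap (μ := volume.restrict Q)
    (ν := volume.restrict (Ioc (0:ℝ) 1)) (f := fun (x : En n) (t : ℝ) =>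
    ENNReal.ofReal ‖fderiv ℝ f ((τ + t * (1 - τ)) • x)‖) (by exact hmeas.aemeasurable)
  -- assemble
  have hJint : IntegrableOn (fun x => |f x - f (τ • x)|) Q := (hfint.sub hfτint).abs
  have hJ : ENNReal.ofReal (∫ x in Q, |f x - f (τ • x)|) =
      ∫⁻ x in Q, ENNReal.ofReal |f x - f (τ • x)| :=
    ofReal_integral_eq_lintegral_ofReal hJint (ae_of_all _ fun x => abs_nonneg _)
  have chain : ENNReal.ofReal (∫ x in Q, |f x - f (τ • x)|) ≤
      ENNReal.ofReal (c0 * ((τ ^ n)⁻¹ * I)) := by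
    rw [hJ]
    calc ∫⁻ x in Q, ENNReal.ofReal |f x - f (τ • x)|
        ≤ ∫⁻ x in Q, ENNReal.ofReal c0 *
            ∫⁻ t in Ioc (0:ℝ) 1, ENNReal.ofReal ‖fderiv ℝ f ((τ + t * (1 - τ)) • x)‖ :=
          setLIntegral_mono' hQm key1
      _ = ENNReal.ofReal c0 * ∫⁻ x in Q,
            ∫⁻ t in Ioc (0:ℝ) 1, ENNReal.ofReal ‖fderiv ℝ f ((τ + t * (1 - τ)) • x)‖ :=
          lintegral_const_mul' _ _ ENNReal.ofReal_ne_top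
      _ = ENNReal.ofReal c0 * ∫⁻ t in Ioc (0:ℝ) 1,
            ∫⁻ x in Q, ENNReal.ofReal ‖fderiv ℝ f ((τ + t * (1 - τ)) • x)‖ := by
          rw [hswap]
      _ ≤ ENNReal.ofReal c0 * ∫⁻ _t in Ioc (0:ℝ) 1, ENNReal.ofReal ((τ ^ n)⁻¹ * I) :=
          mul_le_mul_right (setLIntegral_mono' measurableSet_Ioc key2) _
      _ = ENNReal.ofReal c0 * (ENNReal.ofReal ((τ ^ n)⁻¹ * I) * volume (Ioc (0:ℝ) 1)) := by
          rw [setLIntegral_const]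
      _ = ENNReal.ofReal (c0 * ((τ ^ n)⁻¹ * I)) := by
          rw [Real.volume_Ioc]
          rw [ENNReal.ofReal_mul hc0nn]
          norm_num
  have hfinal : (∫ x in Q, |f x - f (τ • x)|) ≤ c0 * ((τ ^ n)⁻¹ * I) := by
    have h0 : (0:ℝ) ≤ c0 * ((τ ^ n)⁻¹ * I) :=
      mul_nonneg hc0nn (mul_nonneg (by positivity) hInn)
    exact (ENNReal.ofReal_le_ofReal_iff h0).1 chain
  refine le_trans (le_trans hstep1 hfinal) ?_
  have hpow : (τ ^ n)⁻¹ ≤ (τ ^ (n + 1))⁻¹ := by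
    apply inv_anti₀ (by positivity)
    calc τ ^ (n + 1) = τ ^ n * τ := pow_succ τ n
      _ ≤ τ ^ n * 1 := mul_le_mul_of_nonneg_left hτ1 (by positivity)
      _ = τ ^ n := mul_one _
  calc c0 * ((τ ^ n)⁻¹ * I) ≤ c0 * ((τ ^ (n + 1))⁻¹ * I) :=
        mul_le_mul_of_nonneg_left (mul_le_mul_of_nonneg_right hpow hInn) hc0nn
    _ = Real.sqrt n / 2 * ((1 - τ) / τ ^ (n + 1)) * I := by
        rw [hc0, div_eq_mul_inv]
        ring
end
end

section
/- (Vitali covering theorem in ℝ) Let μ be a Radon measure on ℝ and let F be a fine cover of a set E ⊂ ℝ by closed intervals. Then there exists a countable disjoint subcollection F' ⊂ F such that μ(E \ ∪_{I ∈ F'} I) = 0. -/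
open MeasureTheory Filter Metric Set
open scoped ENNReal NNReal Topology

namespace VitaliRealAux

noncomputable local instance : DecidableEq (Set ℝ) := Classical.decEq _

lemma mid_subset {a₁ b₁ a₂ b₂ a₃ b₃ z : ℝ} (h1 : z ∈ Icc a₁ b₁) (h3 : z ∈ Icc a₃ b₃)
    (ha : a₁ ≤ a₂) (hb : b₂ ≤ b₃) :
    Icc a₂ b₂ ⊆ Icc a₁ b₁ ∪ Icc a₃ b₃ := by
  intro t ht
  rcases le_total t z with htz | htz
  · exact Or.inl ⟨ha.trans ht.1, htz.trans h1.2⟩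
  · exact Or.inr ⟨h3.1.trans htz, ht.2.trans hb⟩

lemma triple {a₁ b₁ a₂ b₂ a₃ b₃ z : ℝ} (h1 : z ∈ Icc a₁ b₁) (h2 : z ∈ Icc a₂ b₂)
    (h3 : z ∈ Icc a₃ b₃) :
    Icc a₁ b₁ ⊆ Icc a₂ b₂ ∪ Icc a₃ b₃ ∨ Icc a₂ b₂ ⊆ Icc a₁ b₁ ∪ Icc a₃ b₃ ∨
      Icc a₃ b₃ ⊆ Icc a₁ b₁ ∪ Icc a₂ b₂ := by
  rcases le_total a₁ a₂ with h12 | h21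
  · rcases le_total a₁ a₃ with h13 | h31
    · rcases le_total b₂ b₃ with hb | hb
      · exact Or.inr (Or.inl (mid_subset h1 h3 h12 hb))
      · exact Or.inr (Or.inr (mid_subset h1 h2 h13 hb))
    · rcases le_total b₁ b₂ with hb | hb
      · have := mid_subset h3 h2 h31 hb
        rw [Set.union_comm] at this
        exact Or.inl this
      · have := mid_subset h3 h1 (h31.trans h12) hb
        rw [Set.union_comm] at this
        exact Or.inr (Or.inl this)
  · rcases le_total a₂ a₃ with h23 | h32
    · rcases le_total b₁ b₃ with hb | hb
      · exact Or.inl (mid_subset h2 h3 h21 hb)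
      · have := mid_subset h2 h1 h23 hb
        rw [Set.union_comm] at this
        exact Or.inr (Or.inr this)
    · rcases le_total b₁ b₂ with hb | hb
      · have := mid_subset h3 h2 (h32.trans h21) hb
        rw [Set.union_comm] at this
        exact Or.inl this
      · have := mid_subset h3 h1 h32 hb
        rw [Set.union_comm] at this
        exact Or.inr (Or.inl this)

/-- 2-coloring of a finite family of closed intervals of multiplicity ≤ 2. -/
lemma color (G : Finset (Set ℝ))
    (hG : ∀ I ∈ G, ∃ a b : ℝ, a ≤ b ∧ I = Icc a b)
    (hmult : ∀ (x : ℝ), ∀ I ∈ G, ∀ J ∈ G, ∀ K ∈ G,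
      x ∈ I → x ∈ J → x ∈ K → I = J ∨ I = K ∨ J = K) :
    ∃ H₁ H₂ : Finset (Set ℝ), H₁ ∪ H₂ = G ∧ Disjoint H₁ H₂ ∧
      (↑H₁ : Set (Set ℝ)).PairwiseDisjoint id ∧ (↑H₂ : Set (Set ℝ)).PairwiseDisjoint id := by
  induction G using Finset.strongInduction with
  | _ G ih =>
    rcases G.eq_empty_or_nonempty with rfl | hne
    · exact ⟨∅, ∅, Finset.empty_union ∅, Finset.disjoint_empty_left _, by simp, by simp⟩
    obtain ⟨I, hI, hImax⟩ := G.exists_max_image (fun I => sInf I) hne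
    have hsub : G.erase I ⊂ G := Finset.erase_ssubset hI
    obtain ⟨H₁, H₂, hunion, hdisj, hd1, hd2⟩ :=
      ih (G.erase I) hsub (fun J hJ => hG J (Finset.mem_of_mem_erase hJ))
        (fun x J hJ K hK L hL => hmult x J (Finset.mem_of_mem_erase hJ)
          K (Finset.mem_of_mem_erase hK) L (Finset.mem_of_mem_erase hL))
    obtain ⟨a, b, hab, hIab⟩ := hG I hI
    have hsInfI : sInf I = a := by rw [hIab]; exact csInf_Icc hab
    have hpI : sInf I ∈ I := by rw [hsInfI, hIab]; exact ⟨le_refl a, hab⟩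
    have hH₁sub : H₁ ⊆ G.erase I := hunion ▸ Finset.subset_union_left
    have hH₂sub : H₂ ⊆ G.erase I := hunion ▸ Finset.subset_union_right
    have hS : ∀ J ∈ G.erase I, ∀ K ∈ G.erase I,
        (I ∩ J).Nonempty → (I ∩ K).Nonempty → J = K := by
      intro J hJ K hK ⟨y, hyI, hyJ⟩ ⟨z, hzI, hzK⟩
      have haJ : sInf I ∈ J := by
        obtain ⟨c, d, hcd, hJcd⟩ := hG J (Finset.mem_of_mem_erase hJ)
        have hcle : c ≤ sInf I := by
          have := hImax J (Finset.mem_of_mem_erase hJ)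
          rwa [hJcd, csInf_Icc hcd] at this
        rw [hJcd]
        refine ⟨hcle, ?_⟩
        have h1 : sInf I ≤ y := by rw [hsInfI]; rw [hIab] at hyI; exact hyI.1
        have h2 : y ≤ d := by rw [hJcd] at hyJ; exact hyJ.2
        exact h1.trans h2
      have haK : sInf I ∈ K := by
        obtain ⟨c, d, hcd, hKcd⟩ := hG K (Finset.mem_of_mem_erase hK)
        have hcle : c ≤ sInf I := by
          have := hImax K (Finset.mem_of_mem_erase hK)
          rwa [hKcd, csInf_Icc hcd] at this
        rw [hKcd]
        refine ⟨hcle, ?_⟩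
        have h1 : sInf I ≤ z := by rw [hsInfI]; rw [hIab] at hzI; exact hzI.1
        have h2 : z ≤ d := by rw [hKcd] at hzK; exact hzK.2
        exact h1.trans h2
      rcases hmult (sInf I) J (Finset.mem_of_mem_erase hJ) K (Finset.mem_of_mem_erase hK)
          I hI haJ haK hpI with h | h | h
      · exact h
      · exact absurd h (Finset.ne_of_mem_erase hJ)
      · exact absurd h (Finset.ne_of_mem_erase hK)
    have hInotin : I ∉ G.erase I := Finset.notMem_erase I G
    by_cases hc1 : ∀ J ∈ H₁, Disjoint I J
    · refine ⟨insert I H₁, H₂, ?_, ?_, ?_, hd2⟩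
      · rw [Finset.insert_union, hunion, Finset.insert_erase hI]
      · rw [Finset.disjoint_insert_left]
        exact ⟨fun h => hInotin (hH₂sub h), hdisj⟩
      · rw [Finset.coe_insert]
        exact hd1.insert (fun J hJ _ => hc1 J hJ)
    · push_neg at hc1
      obtain ⟨J₀, hJ₀, hnd⟩ := hc1
      have hc2 : ∀ J ∈ H₂, Disjoint I J := by
        intro J hJ
        by_contra hnd2
        have hJ0J : J₀ = J := hS J₀ (hH₁sub hJ₀) J (hH₂sub hJ)
          (Set.not_disjoint_iff_nonempty_inter.mp hnd)
          (Set.not_disjoint_iff_nonempty_inter.mp hnd2)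
        exact (Finset.disjoint_left.mp hdisj hJ₀) (hJ0J ▸ hJ)
      refine ⟨H₁, insert I H₂, ?_, ?_, hd1, ?_⟩
      · rw [Finset.union_insert, hunion, Finset.insert_erase hI]
      · rw [Finset.disjoint_insert_right]
        exact ⟨fun h => hInotin (hH₁sub h), hdisj⟩
      · rw [Finset.coe_insert]
        exact hd2.insert (fun J hJ _ => hc2 J hJ)

/-- From any finite family of closed intervals one can select two disjoint subfamilies
covering the union. -/
lemma reduce : ∀ (n : ℕ) (G : Finset (Set ℝ)), G.card ≤ n →
    (∀ I ∈ G, ∃ a b : ℝ, a ≤ b ∧ I = Icc a b) →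
    ∃ H₁ H₂ : Finset (Set ℝ), H₁ ⊆ G ∧ H₂ ⊆ G ∧
      (↑H₁ : Set (Set ℝ)).PairwiseDisjoint id ∧ (↑H₂ : Set (Set ℝ)).PairwiseDisjoint id ∧
      ⋃₀ (↑G : Set (Set ℝ)) ⊆ ⋃₀ (↑H₁ : Set (Set ℝ)) ∪ ⋃₀ (↑H₂ : Set (Set ℝ)) := by
  intro n
  induction n with
  | zero =>
    intro G hc hG
    have : G = ∅ := Finset.card_eq_zero.mp (Nat.le_zero.mp hc)
    subst this
    exact ⟨∅, ∅, Finset.Subset.refl _, Finset.Subset.refl _, by simp, by simp, by simp⟩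
  | succ n ih =>
    intro G hc hG
    by_cases hred : ∃ I ∈ G, I ⊆ ⋃₀ ↑(G.erase I)
    · obtain ⟨I, hI, hIs⟩ := hred
      have hcard : (G.erase I).card ≤ n := by
        have := Finset.card_erase_of_mem hI
        omega
      obtain ⟨H₁, H₂, s1, s2, d1, d2, hcov⟩ := ih (G.erase I) hcard
        (fun J hJ => hG J (Finset.mem_of_mem_erase hJ))
      refine ⟨H₁, H₂, s1.trans (Finset.erase_subset _ _), s2.trans (Finset.erase_subset _ _),
        d1, d2, ?_⟩
      refine Set.Subset.trans ?_ hcov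
      intro x hx
      obtain ⟨J, hJ, hxJ⟩ := hx
      by_cases hJI : J = I
      · exact hIs (hJI ▸ hxJ)
      · exact ⟨J, Finset.mem_coe.mpr (Finset.mem_erase.mpr ⟨hJI, hJ⟩), hxJ⟩
    · push_neg at hred
      have hmult : ∀ (x : ℝ), ∀ I ∈ G, ∀ J ∈ G, ∀ K ∈ G,
          x ∈ I → x ∈ J → x ∈ K → I = J ∨ I = K ∨ J = K := by
        intro x I hI J hJ K hK hxI hxJ hxK
        by_contra h
        push_neg at h
        obtain ⟨hIJ, hIK, hJK⟩ := h
        obtain ⟨a1, b1, hab1, rfl⟩ := hG I hI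
        obtain ⟨a2, b2, hab2, rfl⟩ := hG J hJ
        obtain ⟨a3, b3, hab3, rfl⟩ := hG K hK
        have hsub2 : Icc a2 b2 ⊆ ⋃₀ ↑(G.erase (Icc a1 b1)) :=
          Set.subset_sUnion_of_mem (Finset.mem_coe.mpr
            (Finset.mem_erase.mpr ⟨Ne.symm hIJ, hJ⟩))
        have hsub3 : Icc a3 b3 ⊆ ⋃₀ ↑(G.erase (Icc a1 b1)) :=
          Set.subset_sUnion_of_mem (Finset.mem_coe.mpr
            (Finset.mem_erase.mpr ⟨Ne.symm hIK, hK⟩))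
        have hsub1J : Icc a1 b1 ⊆ ⋃₀ ↑(G.erase (Icc a2 b2)) :=
          Set.subset_sUnion_of_mem (Finset.mem_coe.mpr
            (Finset.mem_erase.mpr ⟨hIJ, hI⟩))
        have hsub3J : Icc a3 b3 ⊆ ⋃₀ ↑(G.erase (Icc a2 b2)) :=
          Set.subset_sUnion_of_mem (Finset.mem_coe.mpr
            (Finset.mem_erase.mpr ⟨Ne.symm hJK, hK⟩))
        have hsub1K : Icc a1 b1 ⊆ ⋃₀ ↑(G.erase (Icc a3 b3)) :=
          Set.subset_sUnion_of_mem (Finset.mem_coe.mpr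
            (Finset.mem_erase.mpr ⟨hIK, hI⟩))
        have hsub2K : Icc a2 b2 ⊆ ⋃₀ ↑(G.erase (Icc a3 b3)) :=
          Set.subset_sUnion_of_mem (Finset.mem_coe.mpr
            (Finset.mem_erase.mpr ⟨hJK, hJ⟩))
        rcases triple hxI hxJ hxK with h | h | h
        · exact hred _ hI (h.trans (Set.union_subset hsub2 hsub3))
        · exact hred _ hJ (h.trans (Set.union_subset hsub1J hsub3J))
        · exact hred _ hK (h.trans (Set.union_subset hsub1K hsub2K))
      obtain ⟨H₁, H₂, hu, _, hp1, hp2⟩ := color G hG hmult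
      refine ⟨H₁, H₂, by rw [← hu]; exact Finset.subset_union_left,
        by rw [← hu]; exact Finset.subset_union_right, hp1, hp2, ?_⟩
      rw [← hu, Finset.coe_union, Set.sUnion_union]

/-- Countable subcover: from any cover of `E` by nondegenerate closed intervals one can
extract a countable subfamily still covering `E`. -/
lemma ctble_subcover (E : Set ℝ) (F : Set (Set ℝ))
    (hF : ∀ I ∈ F, ∃ a b : ℝ, a < b ∧ I = Icc a b)
    (hcov : ∀ x ∈ E, ∃ I ∈ F, x ∈ I) :
    ∃ S ⊆ F, S.Countable ∧ E ⊆ ⋃₀ S := by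
  classical
  set W : Set ℝ := ⋃ I : F, interior (I : Set ℝ) with hW
  obtain ⟨T, hTc, hTU⟩ := TopologicalSpace.isOpen_iUnion_countable
    (fun I : F => interior (I : Set ℝ)) (fun _ => isOpen_interior)
  set S₁ : Set (Set ℝ) := (fun I : F => (I : Set ℝ)) '' T with hS₁
  have hS₁F : S₁ ⊆ F := by rintro _ ⟨I, _, rfl⟩; exact I.2
  have hS₁c : S₁.Countable := hTc.image _
  -- the part of E not covered by interiors
  set TL : Set ℝ := {x : ℝ | x ∉ W ∧ ∃ b, x < b ∧ Ioo x b ⊆ W} with hTL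
  set TR : Set ℝ := {x : ℝ | x ∉ W ∧ ∃ a, a < x ∧ Ioo a x ⊆ W} with hTR
  have hTLc : TL.Countable := by
    have hsel : ∀ x : TL, ∃ q : ℚ, (x : ℝ) < (q : ℝ) ∧ Ioo (x : ℝ) (q : ℝ) ⊆ W := by
      rintro ⟨x, hxW, b, hxb, hIoo⟩
      obtain ⟨q, hq1, hq2⟩ := exists_rat_btwn hxb
      exact ⟨q, hq1, fun y hy => hIoo ⟨hy.1, hy.2.trans hq2⟩⟩
    choose f hf1 hf2 using hsel
    have hinj : Function.Injective f := by
      intro x y hxy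
      by_contra hne
      have hne' : (x : ℝ) ≠ (y : ℝ) := fun h => hne (Subtype.ext h)
      rcases hne'.lt_or_gt with h | h
      · have : (y : ℝ) ∈ Ioo (x : ℝ) ((f x : ℚ) : ℝ) := ⟨h, by rw [hxy]; exact hf1 y⟩
        exact y.2.1 (hf2 x this)
      · have : (x : ℝ) ∈ Ioo (y : ℝ) ((f y : ℚ) : ℝ) := ⟨h, by rw [← hxy]; exact hf1 x⟩
        exact x.2.1 (hf2 y this)
    have : Countable TL := ⟨⟨fun x => Encodable.encode (f x),
      fun a b hab => hinj (Encodable.encode_injective hab)⟩⟩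
    exact Set.countable_coe_iff.mp this
  have hTRc : TR.Countable := by
    have hsel : ∀ x : TR, ∃ q : ℚ, (q : ℝ) < (x : ℝ) ∧ Ioo (q : ℝ) (x : ℝ) ⊆ W := by
      rintro ⟨x, hxW, a, hax, hIoo⟩
      obtain ⟨q, hq1, hq2⟩ := exists_rat_btwn hax
      exact ⟨q, hq2, fun y hy => hIoo ⟨hq1.trans hy.1, hy.2⟩⟩
    choose f hf1 hf2 using hsel
    have hinj : Function.Injective f := by
      intro x y hxy
      by_contra hne
      have hne' : (x : ℝ) ≠ (y : ℝ) := fun h => hne (Subtype.ext h)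
      rcases hne'.lt_or_gt with h | h
      · have : (x : ℝ) ∈ Ioo ((f y : ℚ) : ℝ) (y : ℝ) := ⟨by rw [← hxy]; exact hf1 x, h⟩
        exact x.2.1 (hf2 y this)
      · have : (y : ℝ) ∈ Ioo ((f x : ℚ) : ℝ) (x : ℝ) := ⟨by rw [hxy]; exact hf1 y, h⟩
        exact y.2.1 (hf2 x this)
    have : Countable TR := ⟨⟨fun x => Encodable.encode (f x),
      fun a b hab => hinj (Encodable.encode_injective hab)⟩⟩
    exact Set.countable_coe_iff.mp this
  set TB : Set ℝ := {x | x ∈ E ∧ x ∉ W} with hTB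
  have hTBsub : TB ⊆ TL ∪ TR := by
    rintro x ⟨hxE, hxW⟩
    obtain ⟨I, hIF, hxI⟩ := hcov x hxE
    obtain ⟨a, b, hab, rfl⟩ := hF I hIF
    have hIooW : Ioo a b ⊆ W := by
      have : interior (Icc a b) ⊆ W :=
        Set.subset_iUnion (fun J : F => interior (J : Set ℝ)) ⟨Icc a b, hIF⟩
      rwa [interior_Icc] at this
    rcases eq_or_lt_of_le hxI.1 with hax | hax
    · exact Or.inl ⟨hxW, b, hax ▸ hab, hax ▸ hIooW⟩
    · rcases eq_or_lt_of_le hxI.2 with hxb | hxb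
      · exact Or.inr ⟨hxW, a, hxb ▸ hax, hxb ▸ hIooW⟩
      · exact absurd (hIooW ⟨hax, hxb⟩) hxW
  have hTBc : TB.Countable := (hTLc.union hTRc).mono hTBsub
  have hselB : ∀ x : TB, ∃ I, I ∈ F ∧ x.1 ∈ I := by
    rintro ⟨x, hxE, _⟩
    obtain ⟨I, hIF, hxI⟩ := hcov x hxE
    exact ⟨I, hIF, hxI⟩
  choose g hg1 hg2 using hselB
  have : Countable TB := Set.countable_coe_iff.mpr hTBc
  refine ⟨S₁ ∪ Set.range g, Set.union_subset hS₁F (by rintro _ ⟨x, rfl⟩; exact hg1 x),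
    hS₁c.union (Set.countable_range g), ?_⟩
  intro x hxE
  by_cases hxW : x ∈ W
  · have : x ∈ ⋃ I ∈ T, interior ((I : F) : Set ℝ) := by rwa [hTU]
    obtain ⟨I, hIT, hxI⟩ := Set.mem_iUnion₂.mp this
    exact ⟨I, Or.inl ⟨I, hIT, rfl⟩, interior_subset hxI⟩
  · exact ⟨g ⟨x, hxE, hxW⟩, Or.inr ⟨⟨x, hxE, hxW⟩, rfl⟩, hg2 ⟨x, hxE, hxW⟩⟩

/-- Capture lemma: a definite fraction of the (outer) measure of `E` can be captured by a
finite disjoint subfamily. -/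
lemma capture (μ : Measure ℝ) [IsLocallyFiniteMeasure μ] (E : Set ℝ) (u v : ℝ)
    (hE : E ⊆ Ioo u v) (F : Set (Set ℝ))
    (hF : ∀ I ∈ F, ∃ a b : ℝ, a < b ∧ I = Icc a b)
    (hcov : ∀ x ∈ E, ∃ I ∈ F, x ∈ I) :
    ∃ H : Finset (Set ℝ), ↑H ⊆ F ∧ (↑H : Set (Set ℝ)).PairwiseDisjoint id ∧
      8 * μ (E \ ⋃₀ (↑H : Set (Set ℝ))) ≤ 5 * μ E := by
  classical
  have hμE : μ E ≠ ∞ := by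
    refine ne_top_of_le_ne_top ?_ (measure_mono (hE.trans Ioo_subset_Icc_self))
    exact (isCompact_Icc.measure_lt_top (μ := μ)).ne
  rcases eq_or_ne (μ E) 0 with h0 | h0
  · refine ⟨∅, by simp, by simp, ?_⟩
    simp [h0]
  obtain ⟨S, hSF, hSc, hES⟩ := ctble_subcover E F hF hcov
  rcases S.eq_empty_or_nonempty with rfl | hSne
  · rw [Set.sUnion_empty, Set.subset_empty_iff] at hES
    exact absurd (hES ▸ measure_empty) h0
  obtain ⟨f, rfl⟩ := hSc.exists_eq_range hSne
  set ν := μ.restrict E with hν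
  have hmeasI : ∀ n, MeasurableSet (f n) := by
    intro n
    obtain ⟨a, b, _, h⟩ := hF _ (hSF (Set.mem_range_self n))
    rw [h]; exact measurableSet_Icc
  have hIccI : ∀ n, ∃ a b : ℝ, a ≤ b ∧ f n = Icc a b := by
    intro n
    obtain ⟨a, b, hab, h⟩ := hF _ (hSF (Set.mem_range_self n))
    exact ⟨a, b, hab.le, h⟩
  have key : Tendsto (fun N => ν (Set.accumulate f N)) atTop (𝓝 (ν (⋃ n, f n))) :=
    tendsto_measure_iUnion_accumulate
  have hνtop : ν (⋃ n, f n) = μ E := by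
    rw [hν, Measure.restrict_apply (MeasurableSet.iUnion hmeasI)]
    have : E ⊆ ⋃ n, f n := by rwa [Set.sUnion_range] at hES
    rw [Set.inter_eq_self_of_subset_right this]
  have h18 : (1 / 8 : ℝ≥0∞) * μ E ≠ 0 := by
    refine mul_ne_zero ?_ h0
    simp
  have hlt : μ E - (1 / 8) * μ E < ν (⋃ n, f n) := by
    rw [hνtop]
    exact ENNReal.sub_lt_self hμE h0 h18
  obtain ⟨N, hN⟩ := (key.eventually (lt_mem_nhds hlt)).exists
  -- the finite family
  set G : Finset (Set ℝ) := (Finset.range (N + 1)).image f with hG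
  have hGU : ⋃₀ (↑G : Set (Set ℝ)) = Set.accumulate f N := by
    ext x
    simp only [hG, Set.mem_sUnion, Finset.coe_image, Set.mem_image, Finset.mem_coe,
      Finset.mem_range, Set.mem_accumulate, Nat.lt_succ_iff]
    constructor
    · rintro ⟨_, ⟨n, hn, rfl⟩, hx⟩; exact ⟨n, hn, hx⟩
    · rintro ⟨n, hn, hx⟩; exact ⟨f n, ⟨n, hn, rfl⟩, hx⟩
  have hGIcc : ∀ I ∈ G, ∃ a b : ℝ, a ≤ b ∧ I = Icc a b := by
    intro I hI
    obtain ⟨n, _, rfl⟩ := Finset.mem_image.mp hI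
    exact hIccI n
  obtain ⟨H₁, H₂, hs1, hs2, hd1, hd2, hcovsub⟩ := reduce G.card G le_rfl hGIcc
  have hGF : (↑G : Set (Set ℝ)) ⊆ F := by
    intro I hI
    obtain ⟨n, _, rfl⟩ := Finset.mem_image.mp hI
    exact hSF (Set.mem_range_self n)
  have hνA : ν (Set.accumulate f N) ≤ ν (⋃₀ (↑H₁ : Set (Set ℝ))) + ν (⋃₀ (↑H₂ : Set (Set ℝ))) := by
    calc ν (Set.accumulate f N) ≤ ν (⋃₀ (↑H₁ : Set (Set ℝ)) ∪ ⋃₀ (↑H₂ : Set (Set ℝ))) := by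
          refine measure_mono ?_
          rw [← hGU]
          exact hcovsub
      _ ≤ _ := measure_union_le _ _
  -- pick the better color
  have h8top : (8 : ℝ≥0∞) ≠ ∞ := ENNReal.ofNat_ne_top
  have h8inv : (8 : ℝ≥0∞) * (1/8 : ℝ≥0∞) = 1 := by
    rw [one_div]; exact ENNReal.mul_inv_cancel (by norm_num) h8top
  have hmain : ∀ H : Finset (Set ℝ), H ⊆ G →
      (↑H : Set (Set ℝ)).PairwiseDisjoint id →
      μ E - (1/8) * μ E < 2 * ν (⋃₀ (↑H : Set (Set ℝ))) →
      ∃ H' : Finset (Set ℝ), ↑H' ⊆ F ∧ (↑H' : Set (Set ℝ)).PairwiseDisjoint id ∧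
        8 * μ (E \ ⋃₀ (↑H' : Set (Set ℝ))) ≤ 5 * μ E := by
    intro H hHG hHd hH2
    refine ⟨H, (Finset.coe_subset.mpr hHG).trans hGF, hHd, ?_⟩
    have hUmeas : MeasurableSet (⋃₀ (↑H : Set (Set ℝ))) := by
      refine Set.Finite.measurableSet_sUnion H.finite_toSet ?_
      intro I hI
      obtain ⟨c, d, _, h⟩ := hGIcc I (hHG hI)
      rw [h]; exact measurableSet_Icc
    have hcara : μ (E ∩ ⋃₀ (↑H : Set (Set ℝ))) + μ (E \ ⋃₀ (↑H : Set (Set ℝ))) = μ E :=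
      measure_inter_add_diff E hUmeas
    have hνU : ν (⋃₀ (↑H : Set (Set ℝ))) = μ (E ∩ ⋃₀ (↑H : Set (Set ℝ))) := by
      rw [hν, Measure.restrict_apply hUmeas, Set.inter_comm]
    set m := μ E with hm
    set a := μ (E ∩ ⋃₀ (↑H : Set (Set ℝ))) with ha
    set b := μ (E \ ⋃₀ (↑H : Set (Set ℝ))) with hb
    have h2a : m ≤ 2 * a + 1/8 * m := by
      refine tsub_le_iff_right.mp ?_
      rw [hνU] at hH2
      exact hH2.le
    have h16 : 7 * m ≤ 16 * a := by
      have hmul := mul_le_mul_right h2a (8 : ℝ≥0∞)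
      have hexp : (8 : ℝ≥0∞) * (2 * a + 1/8 * m) = 16 * a + m := by
        rw [mul_add]
        congr 1
        · ring
        · rw [← mul_assoc, h8inv, one_mul]
      rw [hexp] at hmul
      have h7 : 7 * m + m ≤ 16 * a + m := by
        refine le_trans (le_of_eq ?_) hmul
        ring
      exact (ENNReal.add_le_add_iff_right hμE).mp h7
    have h16ab : 16 * a + 16 * b = 16 * m := by
      rw [← mul_add, hcara]
    have h7top : (7 : ℝ≥0∞) * m ≠ ∞ := ENNReal.mul_ne_top ENNReal.ofNat_ne_top hμE
    have h16b : 16 * b ≤ 9 * m := by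
      have hstep : 16 * b + 7 * m ≤ 9 * m + 7 * m := by
        calc 16 * b + 7 * m ≤ 16 * b + 16 * a := add_le_add_right h16 _
          _ = 16 * m := by rw [add_comm (16 * b), h16ab]
          _ = 9 * m + 7 * m := by ring
      exact (ENNReal.add_le_add_iff_right h7top).mp hstep
    have h1 : 2 * (8 * b) ≤ 2 * (5 * m) := by
      calc 2 * (8 * b) = 16 * b := by ring
        _ ≤ 9 * m := h16b
        _ ≤ 10 * m := mul_le_mul_left (by norm_num) m
        _ = 2 * (5 * m) := by ring
    exact (ENNReal.mul_le_mul_iff_right two_ne_zero ENNReal.ofNat_ne_top).mp h1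
  rcases le_total (ν (⋃₀ (↑H₂ : Set (Set ℝ)))) (ν (⋃₀ (↑H₁ : Set (Set ℝ)))) with hcmp | hcmp
  · refine hmain H₁ hs1 hd1 ?_
    refine lt_of_lt_of_le hN (hνA.trans ?_)
    rw [two_mul]
    exact add_le_add_right hcmp _
  · refine hmain H₂ hs2 hd2 ?_
    refine lt_of_lt_of_le hN (hνA.trans ?_)
    rw [two_mul]
    exact add_le_add_left hcmp _

/-- Vitali covering theorem inside a bounded open window. -/
lemma window (μ : Measure ℝ) [IsLocallyFiniteMeasure μ] (E : Set ℝ) (u v : ℝ)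
    (hE : E ⊆ Ioo u v) (F : Set (Set ℝ))
    (hF : ∀ I ∈ F, ∃ a b : ℝ, a < b ∧ I = Icc a b)
    (hfine : ∀ x ∈ E, ∀ δ > 0, ∃ I ∈ F, x ∈ I ∧ Metric.diam I < δ) :
    ∃ F' ⊆ F, F'.Countable ∧ F'.PairwiseDisjoint id ∧ (∀ I ∈ F', I ⊆ Ioo u v) ∧
      μ (E \ ⋃₀ F') = 0 := by
  classical
  set P : Finset (Set ℝ) → Prop :=
    fun C => ↑C ⊆ F ∧ (↑C : Set (Set ℝ)).PairwiseDisjoint id ∧ ∀ I ∈ C, I ⊆ Ioo u v with hP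
  have hstep : ∀ C : Finset (Set ℝ), P C → ∃ C' : Finset (Set ℝ), C ⊆ C' ∧ P C' ∧
      8 * μ (E \ ⋃₀ (↑C' : Set (Set ℝ))) ≤ 5 * μ (E \ ⋃₀ (↑C : Set (Set ℝ))) := by
    intro C hC
    obtain ⟨hCF, hCd, hCw⟩ := hC
    set E' := E \ ⋃₀ (↑C : Set (Set ℝ)) with hE'
    set F₁ : Set (Set ℝ) := {I | I ∈ F ∧ I ⊆ Ioo u v ∧ Disjoint I (⋃₀ (↑C : Set (Set ℝ)))}
      with hF₁
    have hclosed : IsClosed (⋃₀ (↑C : Set (Set ℝ))) := by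
      rw [Set.sUnion_eq_biUnion]
      refine Set.Finite.isClosed_biUnion C.finite_toSet ?_
      intro I hI
      obtain ⟨a, b, _, h⟩ := hF I (hCF hI)
      rw [h]; exact isClosed_Icc
    have hcov' : ∀ x ∈ E', ∃ I ∈ F₁, x ∈ I := by
      intro x hx
      have hx1 : x ∈ Ioo u v := hE hx.1
      obtain ⟨ε, hε, hball⟩ := Metric.isOpen_iff.mp hclosed.isOpen_compl x hx.2
      set δ := min ε (min (x - u) (v - x)) with hδ
      have hδpos : 0 < δ := by
        refine lt_min hε (lt_min ?_ ?_) <;> [linarith [hx1.1]; linarith [hx1.2]]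
      obtain ⟨I, hIF, hxI, hdiam⟩ := hfine x hx.1 δ hδpos
      obtain ⟨a, b, hab, hIab⟩ := hF I hIF
      have hIbdd : Bornology.IsBounded I := by rw [hIab]; exact isBounded_Icc a b
      have hIsub : I ⊆ ball x δ := fun y hy =>
        mem_ball.mpr (lt_of_le_of_lt (dist_le_diam_of_mem hIbdd hy hxI) hdiam)
      refine ⟨I, ⟨hIF, ?_, ?_⟩, hxI⟩
      · intro y hy
        have := hIsub hy
        rw [mem_ball, Real.dist_eq, abs_sub_lt_iff] at this
        constructor
        · have h1 : δ ≤ x - u := le_trans (min_le_right _ _) (min_le_left _ _)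
          linarith [this.2]
        · have h2 : δ ≤ v - x := le_trans (min_le_right _ _) (min_le_right _ _)
          linarith [this.1]
      · rw [Set.disjoint_left]
        intro y hy
        have hyb : y ∈ ball x ε := by
          have := hIsub hy
          rw [mem_ball] at this ⊢
          exact lt_of_lt_of_le this (min_le_left _ _)
        exact hball hyb
    have hF₁Icc : ∀ I ∈ F₁, ∃ a b : ℝ, a < b ∧ I = Icc a b := fun I hI => hF I hI.1
    have hE'w : E' ⊆ Ioo u v := fun x hx => hE hx.1
    obtain ⟨H, hHsub, hHd, hHcap⟩ := capture μ E' u v hE'w F₁ hF₁Icc hcov'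
    refine ⟨C ∪ H, Finset.subset_union_left, ⟨?_, ?_, ?_⟩, ?_⟩
    · rw [Finset.coe_union]
      exact Set.union_subset hCF (hHsub.trans (fun I hI => hI.1))
    · rw [Finset.coe_union]
      refine Set.pairwiseDisjoint_union.mpr ⟨hCd, hHd, ?_⟩
      intro I hI J hJ _
      have hJd : Disjoint J (⋃₀ (↑C : Set (Set ℝ))) := (hHsub hJ).2.2
      exact (hJd.mono_right (Set.subset_sUnion_of_mem hI)).symm
    · intro I hI
      rcases Finset.mem_union.mp hI with h | h
      · exact hCw I h
      · exact (hHsub h).2.1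
    · have : E \ ⋃₀ (↑(C ∪ H) : Set (Set ℝ)) = E' \ ⋃₀ (↑H : Set (Set ℝ)) := by
        rw [hE', Finset.coe_union, Set.sUnion_union, Set.diff_diff]
      rw [this]
      exact hHcap
  -- iterate
  set step : Finset (Set ℝ) → Finset (Set ℝ) := fun C =>
    if h : ∃ C' : Finset (Set ℝ), C ⊆ C' ∧ P C' ∧
        8 * μ (E \ ⋃₀ (↑C' : Set (Set ℝ))) ≤ 5 * μ (E \ ⋃₀ (↑C : Set (Set ℝ)))
    then h.choose else C with hstepdef
  have hsub : ∀ C, C ⊆ step C := by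
    intro C
    rw [hstepdef]
    dsimp only
    split
    · next h => exact h.choose_spec.1
    · exact Finset.Subset.refl C
  have hspec : ∀ C, P C → P (step C) ∧
      8 * μ (E \ ⋃₀ (↑(step C) : Set (Set ℝ))) ≤ 5 * μ (E \ ⋃₀ (↑C : Set (Set ℝ))) := by
    intro C hC
    rw [hstepdef]
    dsimp only
    rw [dif_pos (hstep C hC)]
    exact ⟨(hstep C hC).choose_spec.2.1, (hstep C hC).choose_spec.2.2⟩
  set g : ℕ → Finset (Set ℝ) := fun n => step^[n] ∅ with hg
  have hg0 : g 0 = ∅ := rfl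
  have hgsucc : ∀ n, g (n + 1) = step (g n) := by
    intro n
    rw [hg]
    exact Function.iterate_succ_apply' step n ∅
  have hPg : ∀ n, P (g n) := by
    intro n
    induction n with
    | zero =>
      rw [hg0, hP]
      exact ⟨by simp, by simp, by simp⟩
    | succ n ih => rw [hgsucc]; exact (hspec _ ih).1
  have hbound : ∀ n, 8 ^ n * μ (E \ ⋃₀ (↑(g n) : Set (Set ℝ))) ≤ 5 ^ n * μ E := by
    intro n
    induction n with
    | zero =>
      simpa using measure_mono (Set.diff_subset : E \ ⋃₀ (↑(g 0) : Set (Set ℝ)) ⊆ E)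
    | succ n ih =>
      have h1 := (hspec _ (hPg n)).2
      rw [← hgsucc] at h1
      calc 8 ^ (n + 1) * μ (E \ ⋃₀ (↑(g (n + 1)) : Set (Set ℝ)))
          = 8 ^ n * (8 * μ (E \ ⋃₀ (↑(g (n + 1)) : Set (Set ℝ)))) := by ring
        _ ≤ 8 ^ n * (5 * μ (E \ ⋃₀ (↑(g n) : Set (Set ℝ)))) := mul_le_mul_right h1 _
        _ = 5 * (8 ^ n * μ (E \ ⋃₀ (↑(g n) : Set (Set ℝ)))) := by ring
        _ ≤ 5 * (5 ^ n * μ E) := mul_le_mul_right ih _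
        _ = 5 ^ (n + 1) * μ E := by ring
  have hmono : Monotone g := monotone_nat_of_le_succ (fun n => by rw [hgsucc]; exact hsub _)
  set F' : Set (Set ℝ) := ⋃ n, (↑(g n) : Set (Set ℝ)) with hF'
  have hμEfin : μ E ≠ ∞ := by
    refine ne_top_of_le_ne_top ?_ (measure_mono (hE.trans Ioo_subset_Icc_self))
    exact (isCompact_Icc.measure_lt_top (μ := μ)).ne
  refine ⟨F', ?_, ?_, ?_, ?_, ?_⟩
  · exact Set.iUnion_subset (fun n => (hPg n).1)
  · exact Set.countable_iUnion (fun n => (g n).countable_toSet)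
  · intro I hI J hJ hne
    obtain ⟨n, hIn⟩ := Set.mem_iUnion.mp hI
    obtain ⟨m, hJm⟩ := Set.mem_iUnion.mp hJ
    have hIn' : I ∈ (↑(g (max n m)) : Set (Set ℝ)) := hmono (le_max_left n m) hIn
    have hJm' : J ∈ (↑(g (max n m)) : Set (Set ℝ)) := hmono (le_max_right n m) hJm
    exact (hPg (max n m)).2.1 hIn' hJm' hne
  · intro I hI
    obtain ⟨n, hIn⟩ := Set.mem_iUnion.mp hI
    exact (hPg n).2.2 I hIn
  · have ht : ∀ n, μ (E \ ⋃₀ F') ≤ μ (E \ ⋃₀ (↑(g n) : Set (Set ℝ))) := by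
      intro n
      refine measure_mono (Set.diff_subset_diff_right (Set.sUnion_mono ?_))
      exact Set.subset_iUnion (fun k => (↑(g k) : Set (Set ℝ))) n
    set t := μ (E \ ⋃₀ F') with htdef
    have htfin : t ≠ ∞ := ne_top_of_le_ne_top hμEfin (measure_mono Set.diff_subset)
    have hreal : ∀ n, (8 : ℝ) ^ n * t.toReal ≤ (5 : ℝ) ^ n * (μ E).toReal := by
      intro n
      have h1 : 8 ^ n * t ≤ 5 ^ n * μ E :=
        le_trans (mul_le_mul_right (ht n) _) (hbound n)
      have h2 := ENNReal.toReal_mono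
        (ENNReal.mul_ne_top (ENNReal.pow_ne_top ENNReal.ofNat_ne_top) hμEfin) h1
      simpa [ENNReal.toReal_mul, ENNReal.toReal_pow] using h2
    have ht0 : t.toReal ≤ 0 := by
      by_contra hpos
      push_neg at hpos
      have hlim : Tendsto (fun n => (5 / 8 : ℝ) ^ n * (μ E).toReal) atTop (𝓝 0) := by
        have := (tendsto_pow_atTop_nhds_zero_of_lt_one (by norm_num : (0:ℝ) ≤ 5/8)
          (by norm_num : (5/8 : ℝ) < 1)).mul_const ((μ E).toReal)
        simpa using this
      obtain ⟨n, hn⟩ := (hlim.eventually_lt_const hpos).exists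
      have h3 : t.toReal ≤ (5 / 8 : ℝ) ^ n * (μ E).toReal := by
        have h4 := hreal n
        rw [div_pow, div_mul_eq_mul_div, le_div_iff₀ (by positivity : (0:ℝ) < 8 ^ n)]
        linarith [h4]
      linarith
    have : t.toReal = 0 := le_antisymm ht0 ENNReal.toReal_nonneg
    rcases (ENNReal.toReal_eq_zero_iff t).mp this with h | h
    · exact h
    · exact absurd h htfin

end VitaliRealAux

/-- Vitali covering theorem on `ℝ` for arbitrary Radon measures and (uncentered)
closed intervals: every fine cover of `E` by nondegenerate closed intervals admits a
countable disjoint subfamily covering `μ`-almost all of `E`. -/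
theorem vitali_real (μ : Measure ℝ) [IsLocallyFiniteMeasure μ]
    (E : Set ℝ) (F : Set (Set ℝ))
    (hF : ∀ I ∈ F, ∃ a b : ℝ, a < b ∧ I = Set.Icc a b)
    (hfine : ∀ x ∈ E, ∀ δ > 0, ∃ I ∈ F, x ∈ I ∧ Metric.diam I < δ) :
    ∃ F' ⊆ F, F'.Countable ∧ F'.PairwiseDisjoint id ∧ μ (E \ ⋃₀ F') = 0 := by
  classical
  -- a countable set of atoms
  have hatoms : Set.Countable {x : ℝ | μ {x} ≠ 0} := by
    have h := MeasureTheory.Measure.countable_meas_pos_of_disjoint_iUnion (μ := μ)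
      (As := fun x : ℝ => {x}) (fun x => measurableSet_singleton x)
      (fun x y hxy => Set.disjoint_singleton.mpr hxy)
    refine h.mono ?_
    intro x hx
    simpa [pos_iff_ne_zero] using hx
  -- choose grid points which are not atoms
  have hgrid : ∀ k : ℤ, ∃ x : ℝ, x ∈ Ioo (k : ℝ) ((k : ℝ) + 1) ∧ μ {x} = 0 := by
    intro k
    by_contra h
    push_neg at h
    have hcnt : (Ioo (k : ℝ) ((k : ℝ) + 1)).Countable :=
      hatoms.mono (fun x hx => h x hx)
    have hlt : (k : ℝ) < (k : ℝ) + 1 := by linarith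
    have hle := hcnt.le_aleph0
    rw [Cardinal.mk_Ioo_real hlt] at hle
    exact absurd hle Cardinal.aleph0_lt_continuum.not_ge
  choose c hc1 hc2 using hgrid
  have hcmono : ∀ j k : ℤ, j < k → c j < c k := by
    intro j k hjk
    have h1 : c j < (j : ℝ) + 1 := (hc1 j).2
    have h2 : (k : ℝ) < c k := (hc1 k).1
    have h3 : (j : ℝ) + 1 ≤ (k : ℝ) := by exact_mod_cast hjk
    linarith
  -- cover each window
  have hwin : ∀ k : ℤ, ∃ G ⊆ F, G.Countable ∧ G.PairwiseDisjoint id ∧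
      (∀ I ∈ G, I ⊆ Ioo (c k) (c (k + 1))) ∧
      μ ((E ∩ Ioo (c k) (c (k + 1))) \ ⋃₀ G) = 0 := by
    intro k
    exact VitaliRealAux.window μ (E ∩ Ioo (c k) (c (k + 1))) (c k) (c (k + 1)) Set.inter_subset_right F hF
      (fun x hx δ hδ => hfine x hx.1 δ hδ)
  choose G hG1 hG2 hG3 hG4 hG5 using hwin
  refine ⟨⋃ k : ℤ, G k, Set.iUnion_subset hG1, Set.countable_iUnion hG2, ?_, ?_⟩
  · -- pairwise disjoint
    intro I hI J hJ hne
    obtain ⟨j, hIj⟩ := Set.mem_iUnion.mp hI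
    obtain ⟨k, hJk⟩ := Set.mem_iUnion.mp hJ
    rcases lt_trichotomy j k with h | h | h
    · have hwd : c (j + 1) ≤ c k := by
        rcases lt_or_eq_of_le (Int.add_one_le_iff.mpr h) with h' | h'
        · exact (hcmono _ _ h').le
        · rw [h']
      have hIsub := hG4 j I hIj
      have hJsub := hG4 k J hJk
      refine Set.disjoint_left.mpr (fun y hyI hyJ => ?_)
      have h1 := (hIsub hyI).2
      have h2 := (hJsub hyJ).1
      linarith
    · exact hG3 j hIj (h ▸ hJk) hne
    · have hwd : c (k + 1) ≤ c j := by
        rcases lt_or_eq_of_le (Int.add_one_le_iff.mpr h) with h' | h'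
        · exact (hcmono _ _ h').le
        · rw [h']
      have hIsub := hG4 j I hIj
      have hJsub := hG4 k J hJk
      refine Set.disjoint_left.mpr (fun y hyI hyJ => ?_)
      have h1 := (hIsub hyI).1
      have h2 := (hJsub hyJ).2
      linarith
  · -- measure zero
    refine measure_mono_null (t := (⋃ k : ℤ, (E ∩ Ioo (c k) (c (k + 1))) \ ⋃₀ G k)
      ∪ ⋃ k : ℤ, {c k}) ?_ ?_
    · intro x hx
      obtain ⟨hxE, hxU⟩ := hx
      set m : ℤ := ⌊x⌋ with hm
      have hx1 : (m : ℝ) ≤ x := Int.floor_le x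
      have hx2 : x < (m : ℝ) + 1 := Int.lt_floor_add_one x
      have hl : c (m - 1) < x := by
        have := (hc1 (m - 1)).2
        push_cast at this
        linarith
      have hr : x < c (m + 1) := by
        have := (hc1 (m + 1)).1
        push_cast at this
        linarith
      have hnotmem : ∀ k : ℤ, x ∉ ⋃₀ G k := by
        intro k hk
        exact hxU (Set.sUnion_mono (Set.subset_iUnion (fun i : ℤ => G i) k) hk)
      rcases lt_trichotomy x (c m) with h | h | h
      · refine Or.inl (Set.mem_iUnion.mpr ⟨m - 1, ⟨⟨hxE, hl, ?_⟩, hnotmem (m - 1)⟩⟩)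
        rw [sub_add_cancel]
        exact h
      · exact Or.inr (Set.mem_iUnion.mpr ⟨m, h.symm ▸ rfl⟩)
      · exact Or.inl (Set.mem_iUnion.mpr ⟨m, ⟨⟨hxE, h, hr⟩, hnotmem m⟩⟩)
    · refine measure_union_null (measure_iUnion_null hG5) (measure_iUnion_null ?_)
      intro k
      exact hc2 k
end
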